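/- Let T_1 and T_2 be doubly commuting contractions on a complex Hilbert space H. Then H decomposes into the orthogonal sum of four closed subspaces H_1 ⊕ H_2 ⊕ H_3 ⊕ H_4, each jointly reducing T_1 and T_2, such that each restriction T_i|_{H_j} is either unitary or completely non-unitary, with each of the four type-combinations (unitary, unitary), (unitary, c.n.u.), (c.n.u., unitary), (c.n.u., c.n.u.) realized on exactly one H_j. Some subspaces may be zero. -/

import Mathlib

open ContinuousLinearMap Filter
open scoped InnerProductSpace

noncomputable section

variable {H : Type*} [NormedAddCommGroup H] [InnerProductSpace ℂ H] [CompleteSpace H]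

/-- K is a reducing subspace for T. -/
def Reduces (T : H →L[ℂ] H) (K : Submodule ℂ H) : Prop :=
  (∀ h ∈ K, T h ∈ K) ∧ (∀ h ∈ K, adjoint T h ∈ K)

/-- The restriction of T to K is a unitary of K (a surjective isometry of K). -/
def UnitaryOn (T : H →L[ℂ] H) (K : Submodule ℂ H) : Prop :=
  (∀ h ∈ K, ‖T h‖ = ‖h‖) ∧ (∀ h ∈ K, ∃ g ∈ K, T g = h)

/-- The restriction of T to K is a pure isometry (unilateral shift). -/
def PureIsometryOn (T : H →L[ℂ] H) (K : Submodule ℂ H) : Prop :=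
  (∀ h ∈ K, ‖T h‖ = ‖h‖) ∧
    ∀ h ∈ K, Tendsto (fun n : ℕ => ((adjoint T) ^ n) h) atTop (nhds 0)

/-- The restriction of T to K is completely non-unitary. -/
def CnuOn (T : H →L[ℂ] H) (K : Submodule ℂ H) : Prop :=
  ∀ L : Submodule ℂ H, L ≤ K → IsClosed (L : Set H) →
    Reduces T L → UnitaryOn T L → L = ⊥


lemma my_norm_adjoint (T : H →L[ℂ] H) : ‖adjoint T‖ = ‖T‖ := by
  rw [← star_eq_adjoint]; exact norm_star T

lemma my_adjoint_pow (T : H →L[ℂ] H) (n : ℕ) : adjoint (T ^ n) = (adjoint T) ^ n := by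
  rw [← star_eq_adjoint, ← star_eq_adjoint, star_pow]

lemma norm_pow_le_one (T : H →L[ℂ] H) (hT : ‖T‖ ≤ 1) (n : ℕ) : ‖T ^ n‖ ≤ 1 := by
  induction n with
  | zero => rw [pow_zero]; exact norm_id_le
  | succ m ih =>
      rw [pow_succ]
      calc ‖T ^ m * T‖ ≤ ‖T ^ m‖ * ‖T‖ := norm_mul_le _ _
        _ ≤ 1 * 1 := mul_le_mul ih hT (norm_nonneg _) zero_le_one
        _ = 1 := one_mul 1

/-- Key lemma: for a contraction S, S*S h = h iff ‖S h‖ = ‖h‖. -/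
lemma fix_iff_isom (S : H →L[ℂ] H) (hS : ‖S‖ ≤ 1) (h : H) :
    adjoint S (S h) = h ↔ ‖S h‖ = ‖h‖ := by
  constructor
  · intro hf
    have h0 : (⟪S h, S h⟫_ℂ) = ⟪h, h⟫_ℂ := by
      rw [← adjoint_inner_left, hf]
    rw [inner_self_eq_norm_sq_to_K, inner_self_eq_norm_sq_to_K] at h0
    have h1 : (‖S h‖ : ℂ) ^ 2 = (‖h‖ : ℂ) ^ 2 := h0
    have h2 : ‖S h‖ ^ 2 = ‖h‖ ^ 2 := by exact_mod_cast h1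
    nlinarith [norm_nonneg (S h), norm_nonneg h]
  · intro hn
    have h1 : ‖adjoint S (S h)‖ ≤ ‖h‖ := by
      calc ‖adjoint S (S h)‖ ≤ ‖adjoint S‖ * ‖S h‖ := le_opNorm _ _
        _ ≤ 1 * ‖h‖ := by
            rw [hn, my_norm_adjoint]
            exact mul_le_mul_of_nonneg_right hS (norm_nonneg h)
        _ = ‖h‖ := one_mul _
    have h2 : RCLike.re (⟪adjoint S (S h), h⟫_ℂ) = ‖h‖ ^ 2 := by
      rw [adjoint_inner_left, inner_self_eq_norm_sq, hn]
    have key : ‖adjoint S (S h) - h‖ ^ 2 ≤ 0 := by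
      rw [@norm_sub_sq ℂ, h2]
      nlinarith [norm_nonneg (adjoint S (S h)), norm_nonneg h]
    have : ‖adjoint S (S h) - h‖ = 0 := by
      nlinarith [norm_nonneg (adjoint S (S h) - h)]
    rwa [norm_eq_zero, sub_eq_zero] at this

/-- The unitary part of a contraction. -/
def UPart (T : H →L[ℂ] H) : Submodule ℂ H :=
  ⨅ n : ℕ, (LinearMap.ker (((adjoint T) ^ n * T ^ n - 1 : H →L[ℂ] H) : H →ₗ[ℂ] H) ⊓
    LinearMap.ker ((T ^ n * (adjoint T) ^ n - 1 : H →L[ℂ] H) : H →ₗ[ℂ] H))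

lemma mem_UPart (T : H →L[ℂ] H) (h : H) :
    h ∈ UPart T ↔ ∀ n : ℕ, ((adjoint T) ^ n) ((T ^ n) h) = h ∧
      (T ^ n) (((adjoint T) ^ n) h) = h := by
  simp only [UPart, Submodule.mem_iInf, Submodule.mem_inf, LinearMap.mem_ker,
    ContinuousLinearMap.coe_coe, sub_apply, ContinuousLinearMap.mul_apply,
    ContinuousLinearMap.one_apply, sub_eq_zero]

lemma isClosed_UPart (T : H →L[ℂ] H) : IsClosed ((UPart T : Submodule ℂ H) : Set H) := by
  have : ((UPart T : Submodule ℂ H) : Set H) =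
      ⋂ n : ℕ, ({h : H | ((adjoint T) ^ n * T ^ n - 1 : H →L[ℂ] H) h = 0} ∩
        {h : H | (T ^ n * (adjoint T) ^ n - 1 : H →L[ℂ] H) h = 0}) := by
    ext h
    simp only [UPart, Submodule.mem_iInf, SetLike.mem_coe, Set.mem_iInter, Set.mem_inter_iff,
      Submodule.mem_inf, LinearMap.mem_ker, ContinuousLinearMap.coe_coe, Set.mem_setOf_eq]
  rw [this]
  exact isClosed_iInter fun n => IsClosed.inter
    (isClosed_eq (map_continuous _) continuous_const)
    (isClosed_eq (map_continuous _) continuous_const)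

lemma mem_UPart_iff_norm (T : H →L[ℂ] H) (hT : ‖T‖ ≤ 1) (h : H) :
    h ∈ UPart T ↔ ∀ n : ℕ, ‖(T ^ n) h‖ = ‖h‖ ∧ ‖((adjoint T) ^ n) h‖ = ‖h‖ := by
  rw [mem_UPart]
  have e1 : ∀ n : ℕ, (((adjoint T) ^ n) ((T ^ n) h) = h ↔ ‖(T ^ n) h‖ = ‖h‖) := by
    intro n
    have := fix_iff_isom (T ^ n) (norm_pow_le_one T hT n) h
    rwa [my_adjoint_pow] at this
  have e2 : ∀ n : ℕ, ((T ^ n) (((adjoint T) ^ n) h) = h ↔ ‖((adjoint T) ^ n) h‖ = ‖h‖) := by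
    intro n
    have hadj : ‖(adjoint T) ^ n‖ ≤ 1 :=
      norm_pow_le_one _ (le_of_eq_of_le (my_norm_adjoint T) hT) n
    have := fix_iff_isom ((adjoint T) ^ n) hadj h
    rwa [my_adjoint_pow, adjoint_adjoint] at this
  exact forall_congr' fun n => and_congr (e1 n) (e2 n)

lemma UPart_adjoint (T : H →L[ℂ] H) : UPart (adjoint T) = UPart T := by
  ext h
  rw [mem_UPart, mem_UPart]
  simp only [adjoint_adjoint]
  exact forall_congr' fun n => and_comm

lemma map_mem_UPart (T : H →L[ℂ] H) (hT : ‖T‖ ≤ 1) {h : H} (hh : h ∈ UPart T) :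
    T h ∈ UPart T := by
  have hfix := (mem_UPart T h).1 hh
  have hnorm := (mem_UPart_iff_norm T hT h).1 hh
  have hTh : ‖T h‖ = ‖h‖ := by
    have := (hnorm 1).1; rwa [pow_one] at this
  have hadjT : (adjoint T) (T h) = h := by
    have := (hfix 1).1; rwa [pow_one, pow_one] at this
  rw [mem_UPart_iff_norm T hT]
  intro n
  constructor
  · have e : (T ^ n) (T h) = (T ^ (n + 1)) h := by rw [pow_succ, ContinuousLinearMap.mul_apply]
    rw [e, (hnorm (n + 1)).1, hTh]
  · cases n with
    | zero => simp
    | succ m =>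
        have e : ((adjoint T) ^ (m + 1)) (T h) = ((adjoint T) ^ m) h := by
          rw [pow_succ, ContinuousLinearMap.mul_apply, hadjT]
        rw [e, (hnorm m).2, hTh]

lemma adjoint_map_mem_UPart (T : H →L[ℂ] H) (hT : ‖T‖ ≤ 1) {h : H} (hh : h ∈ UPart T) :
    adjoint T h ∈ UPart T := by
  rw [← UPart_adjoint] at hh ⊢
  exact map_mem_UPart (adjoint T) (le_of_eq_of_le (my_norm_adjoint T) hT) hh

/-- If `S` commutes with `T` and with `adjoint T`, then `S` maps `UPart T` into itself. -/
lemma commutant_map_UPart {S T : H →L[ℂ] H} (hc : S * T = T * S)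
    (hc' : S * adjoint T = adjoint T * S) {h : H} (hh : h ∈ UPart T) :
    S h ∈ UPart T := by
  have hfix := (mem_UPart T h).1 hh
  rw [mem_UPart]
  intro n
  have c1 : S * T ^ n = T ^ n * S := ((Commute.pow_right hc n)).eq
  have c2 : S * (adjoint T) ^ n = (adjoint T) ^ n * S := ((Commute.pow_right hc' n)).eq
  constructor
  · have e1 : (T ^ n) (S h) = S ((T ^ n) h) := by
      have := DFunLike.congr_fun c1.symm h
      simpa [mul_apply] using this
    have e2 : ((adjoint T) ^ n) (S ((T ^ n) h)) = S (((adjoint T) ^ n) ((T ^ n) h)) := by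
      have := DFunLike.congr_fun c2.symm ((T ^ n) h)
      simpa [mul_apply] using this
    rw [e1, e2, (hfix n).1]
  · have e1 : ((adjoint T) ^ n) (S h) = S (((adjoint T) ^ n) h) := by
      have := DFunLike.congr_fun c2.symm h
      simpa [mul_apply] using this
    have e2 : (T ^ n) (S (((adjoint T) ^ n) h)) = S ((T ^ n) (((adjoint T) ^ n) h)) := by
      have := DFunLike.congr_fun c1.symm (((adjoint T) ^ n) h)
      simpa [mul_apply] using this
    rw [e1, e2, (hfix n).2]

/-- If `adjoint S` maps `K` into itself then `S` maps `Kᗮ` into itself. -/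
lemma map_orthogonal {S : H →L[ℂ] H} {K : Submodule ℂ H}
    (hK : ∀ x ∈ K, adjoint S x ∈ K) : ∀ y ∈ Kᗮ, S y ∈ Kᗮ := by
  intro y hy
  rw [Submodule.mem_orthogonal]
  intro u hu
  have e : ⟪(adjoint S) u, y⟫_ℂ = ⟪u, S y⟫_ℂ := adjoint_inner_left S y u
  rw [← e]
  exact (Submodule.mem_orthogonal K y).1 hy _ (hK u hu)

/-- On any invariant subspace of the unitary part, `T` acts unitarily. -/
lemma unitaryOn_of_le_UPart {T : H →L[ℂ] H} (hT : ‖T‖ ≤ 1) {K : Submodule ℂ H}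
    (hle : K ≤ UPart T) (hadj : ∀ x ∈ K, adjoint T x ∈ K) : UnitaryOn T K := by
  constructor
  · intro h hh
    have := ((mem_UPart_iff_norm T hT h).1 (hle hh) 1).1
    rwa [pow_one] at this
  · intro h hh
    refine ⟨adjoint T h, hadj h hh, ?_⟩
    have := ((mem_UPart T h).1 (hle hh) 1).2
    rwa [pow_one, pow_one] at this

/-- If `K` meets `UPart T` trivially, then `T` is c.n.u. on `K`. -/
lemma cnuOn_of_disjoint {T : H →L[ℂ] H} (hT : ‖T‖ ≤ 1) {K : Submodule ℂ H}
    (hdisj : ∀ h ∈ K, h ∈ UPart T → h = 0) : CnuOn T K := by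
  intro L hLK _hLcl hred hun
  rw [Submodule.eq_bot_iff]
  intro h hh
  refine hdisj h (hLK hh) ?_
  rw [mem_UPart_iff_norm T hT]
  have fwd : ∀ n : ℕ, (T ^ n) h ∈ L ∧ ‖(T ^ n) h‖ = ‖h‖ := by
    intro n
    induction n with
    | zero => simpa using hh
    | succ m ih =>
        have e : (T ^ (m + 1)) h = T ((T ^ m) h) := by rw [pow_succ', ContinuousLinearMap.mul_apply]
        refine ⟨by rw [e]; exact hred.1 _ ih.1, ?_⟩
        rw [e, hun.1 _ ih.1, ih.2]
  have bwd : ∀ n : ℕ, ((adjoint T) ^ n) h ∈ L ∧ ‖((adjoint T) ^ n) h‖ = ‖h‖ := by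
    intro n
    induction n with
    | zero => simpa using hh
    | succ m ih =>
        have e : ((adjoint T) ^ (m + 1)) h = adjoint T (((adjoint T) ^ m) h) := by
          rw [pow_succ', ContinuousLinearMap.mul_apply]
        refine ⟨by rw [e]; exact hred.2 _ ih.1, ?_⟩
        obtain ⟨w, hwL, hTw⟩ := hun.2 _ ih.1
        have hw : adjoint T (T w) = w :=
          (fix_iff_isom T hT w).2 (hun.1 w hwL)
        have e2 : adjoint T (((adjoint T) ^ m) h) = w := by rw [← hTw, hw]
        rw [e, e2, ← hun.1 w hwL, hTw, ih.2]
  exact fun n => ⟨(fwd n).2, (bwd n).2⟩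

/-- Components of an orthogonal decomposition along a jointly invariant closed
subspace `K` stay in `UPart T`. -/
lemma comp_mem_UPart {T : H →L[ℂ] H} {K : Submodule ℂ H}
    (hK1 : ∀ x ∈ K, T x ∈ K) (hK2 : ∀ x ∈ K, adjoint T x ∈ K)
    {u v : H} (hu : u ∈ K) (hv : v ∈ Kᗮ) (huv : u + v ∈ UPart T) :
    u ∈ UPart T ∧ v ∈ UPart T := by
  have hK1' : ∀ n : ℕ, ∀ x ∈ K, (T ^ n) x ∈ K := by
    intro n
    induction n with
    | zero => intro x hx; simpa using hx
    | succ m ih =>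
        intro x hx
        have e : (T ^ (m + 1)) x = T ((T ^ m) x) := by rw [pow_succ', ContinuousLinearMap.mul_apply]
        rw [e]; exact hK1 _ (ih x hx)
  have hK2' : ∀ n : ℕ, ∀ x ∈ K, ((adjoint T) ^ n) x ∈ K := by
    intro n
    induction n with
    | zero => intro x hx; simpa using hx
    | succ m ih =>
        intro x hx
        have e : ((adjoint T) ^ (m + 1)) x = adjoint T (((adjoint T) ^ m) x) := by
          rw [pow_succ', ContinuousLinearMap.mul_apply]
        rw [e]; exact hK2 _ (ih x hx)
  have hO1 : ∀ n : ℕ, ∀ x ∈ Kᗮ, (T ^ n) x ∈ Kᗮ := by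
    intro n x hx
    refine map_orthogonal (S := T ^ n) ?_ x hx
    intro z hz
    rw [my_adjoint_pow]
    exact hK2' n z hz
  have hO2 : ∀ n : ℕ, ∀ x ∈ Kᗮ, ((adjoint T) ^ n) x ∈ Kᗮ := by
    intro n x hx
    refine map_orthogonal (S := (adjoint T) ^ n) ?_ x hx
    intro z hz
    rw [my_adjoint_pow, adjoint_adjoint]
    exact hK1' n z hz
  have hfix := (mem_UPart T (u + v)).1 huv
  have key : ∀ (A : H →L[ℂ] H), (∀ x ∈ K, A x ∈ K) → (∀ x ∈ Kᗮ, A x ∈ Kᗮ) →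
      A (u + v) = u + v → A u = u ∧ A v = v := by
    intro A hAK hAO hfixA
    have hsum : A u + A v = u + v := by rw [← map_add]; exact hfixA
    have hdiff : A u - u = v - A v := by
      rw [sub_eq_sub_iff_add_eq_add, hsum, add_comm]
    have hmem : A u - u ∈ K ⊓ Kᗮ :=
      ⟨Submodule.sub_mem K (hAK u hu) hu,
        hdiff ▸ Submodule.sub_mem Kᗮ hv (hAO v hv)⟩
    have hbot : A u - u = 0 := by
      have := (Submodule.orthogonal_disjoint K).le_bot hmem
      simpa using this
    have hAu : A u = u := by rwa [sub_eq_zero] at hbot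
    refine ⟨hAu, ?_⟩
    have := hsum
    rw [hAu] at this
    exact add_left_cancel this
  have keyA : ∀ n : ℕ, ((adjoint T) ^ n * T ^ n : H →L[ℂ] H) u = u ∧
      ((adjoint T) ^ n * T ^ n : H →L[ℂ] H) v = v := by
    intro n
    refine key _ (fun x hx => by rw [ContinuousLinearMap.mul_apply]; exact hK2' n _ (hK1' n x hx))
      (fun x hx => by rw [ContinuousLinearMap.mul_apply]; exact hO2 n _ (hO1 n x hx)) ?_
    rw [ContinuousLinearMap.mul_apply]; exact (hfix n).1
  have keyB : ∀ n : ℕ, ((T ^ n * (adjoint T) ^ n : H →L[ℂ] H)) u = u ∧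
      ((T ^ n * (adjoint T) ^ n : H →L[ℂ] H)) v = v := by
    intro n
    refine key _ (fun x hx => by rw [ContinuousLinearMap.mul_apply]; exact hK1' n _ (hK2' n x hx))
      (fun x hx => by rw [ContinuousLinearMap.mul_apply]; exact hO1 n _ (hO2 n x hx)) ?_
    rw [ContinuousLinearMap.mul_apply]; exact (hfix n).2
  constructor
  · rw [mem_UPart]
    intro n
    refine ⟨?_, ?_⟩
    · have := (keyA n).1; rwa [ContinuousLinearMap.mul_apply] at this
    · have := (keyB n).1; rwa [ContinuousLinearMap.mul_apply] at this
  · rw [mem_UPart]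
    intro n
    refine ⟨?_, ?_⟩
    · have := (keyA n).2; rwa [ContinuousLinearMap.mul_apply] at this
    · have := (keyB n).2; rwa [ContinuousLinearMap.mul_apply] at this

theorem doubly_commuting_pair_canonical_decomposition
    (T₁ T₂ : H →L[ℂ] H) (hT₁ : ‖T₁‖ ≤ 1) (hT₂ : ‖T₂‖ ≤ 1)
    (hcomm : T₁ * T₂ = T₂ * T₁) (hdcomm : T₁ * adjoint T₂ = adjoint T₂ * T₁) :
    ∃ H₁ H₂ H₃ H₄ : Submodule ℂ H,
      IsClosed (H₁ : Set H) ∧ IsClosed (H₂ : Set H) ∧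
      IsClosed (H₃ : Set H) ∧ IsClosed (H₄ : Set H) ∧
      (∀ x ∈ H₁, ∀ y ∈ H₂, ⟪x, y⟫_ℂ = 0) ∧
      (∀ x ∈ H₁, ∀ y ∈ H₃, ⟪x, y⟫_ℂ = 0) ∧
      (∀ x ∈ H₁, ∀ y ∈ H₄, ⟪x, y⟫_ℂ = 0) ∧
      (∀ x ∈ H₂, ∀ y ∈ H₃, ⟪x, y⟫_ℂ = 0) ∧
      (∀ x ∈ H₂, ∀ y ∈ H₄, ⟪x, y⟫_ℂ = 0) ∧
      (∀ x ∈ H₃, ∀ y ∈ H₄, ⟪x, y⟫_ℂ = 0) ∧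
      H₁ ⊔ H₂ ⊔ H₃ ⊔ H₄ = ⊤ ∧
      (Reduces T₁ H₁ ∧ Reduces T₂ H₁) ∧
      (Reduces T₁ H₂ ∧ Reduces T₂ H₂) ∧
      (Reduces T₁ H₃ ∧ Reduces T₂ H₃) ∧
      (Reduces T₁ H₄ ∧ Reduces T₂ H₄) ∧
      (UnitaryOn T₁ H₁ ∧ UnitaryOn T₂ H₁) ∧
      (UnitaryOn T₁ H₂ ∧ CnuOn T₂ H₂) ∧
      (CnuOn T₁ H₃ ∧ UnitaryOn T₂ H₃) ∧
      (CnuOn T₁ H₄ ∧ CnuOn T₂ H₄) := by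
  have hT₁a : ‖adjoint T₁‖ ≤ 1 := le_of_eq_of_le (my_norm_adjoint T₁) hT₁
  have hT₂a : ‖adjoint T₂‖ ≤ 1 := le_of_eq_of_le (my_norm_adjoint T₂) hT₂
  set U₁ := UPart T₁ with hU₁
  set U₂ := UPart T₂ with hU₂
  -- derived commutation relations
  have hdcomm' : T₁ * star T₂ = star T₂ * T₁ := by rw [star_eq_adjoint]; exact hdcomm
  have h1 : adjoint T₂ * adjoint T₁ = adjoint T₁ * adjoint T₂ := by
    rw [← star_eq_adjoint, ← star_eq_adjoint, ← star_mul, ← star_mul, hcomm]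
  have h2 : T₂ * adjoint T₁ = adjoint T₁ * T₂ := by
    rw [← star_eq_adjoint]
    calc T₂ * star T₁ = star (T₁ * star T₂) := by rw [star_mul, star_star]
      _ = star (star T₂ * T₁) := by rw [hdcomm']
      _ = star T₁ * T₂ := by rw [star_mul, star_star]
  -- invariance of the unitary parts
  have U1_T1 : ∀ x ∈ U₁, T₁ x ∈ U₁ := fun x hx => map_mem_UPart T₁ hT₁ hx
  have U1_T1a : ∀ x ∈ U₁, adjoint T₁ x ∈ U₁ := fun x hx => adjoint_map_mem_UPart T₁ hT₁ hx
  have U2_T2 : ∀ x ∈ U₂, T₂ x ∈ U₂ := fun x hx => map_mem_UPart T₂ hT₂ hx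
  have U2_T2a : ∀ x ∈ U₂, adjoint T₂ x ∈ U₂ := fun x hx => adjoint_map_mem_UPart T₂ hT₂ hx
  have U2_T1 : ∀ x ∈ U₂, T₁ x ∈ U₂ := fun x hx => commutant_map_UPart hcomm hdcomm hx
  have U2_T1a : ∀ x ∈ U₂, adjoint T₁ x ∈ U₂ := fun x hx =>
    commutant_map_UPart h2.symm h1.symm hx
  have U1_T2 : ∀ x ∈ U₁, T₂ x ∈ U₁ := fun x hx => commutant_map_UPart hcomm.symm h2 hx
  have U1_T2a : ∀ x ∈ U₁, adjoint T₂ x ∈ U₁ := fun x hx =>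
    commutant_map_UPart hdcomm.symm h1 hx
  -- invariance of the orthocomplements
  have U1o_T1 : ∀ x ∈ U₁ᗮ, T₁ x ∈ U₁ᗮ := map_orthogonal U1_T1a
  have U1o_T1a : ∀ x ∈ U₁ᗮ, adjoint T₁ x ∈ U₁ᗮ :=
    map_orthogonal (by rw [adjoint_adjoint]; exact U1_T1)
  have U1o_T2 : ∀ x ∈ U₁ᗮ, T₂ x ∈ U₁ᗮ := map_orthogonal U1_T2a
  have U1o_T2a : ∀ x ∈ U₁ᗮ, adjoint T₂ x ∈ U₁ᗮ :=
    map_orthogonal (by rw [adjoint_adjoint]; exact U1_T2)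
  have U2o_T1 : ∀ x ∈ U₂ᗮ, T₁ x ∈ U₂ᗮ := map_orthogonal U2_T1a
  have U2o_T1a : ∀ x ∈ U₂ᗮ, adjoint T₁ x ∈ U₂ᗮ :=
    map_orthogonal (by rw [adjoint_adjoint]; exact U2_T1)
  have U2o_T2 : ∀ x ∈ U₂ᗮ, T₂ x ∈ U₂ᗮ := map_orthogonal U2_T2a
  have U2o_T2a : ∀ x ∈ U₂ᗮ, adjoint T₂ x ∈ U₂ᗮ :=
    map_orthogonal (by rw [adjoint_adjoint]; exact U2_T2)
  refine ⟨U₁ ⊓ U₂, U₁ ⊓ U₂ᗮ, U₁ᗮ ⊓ U₂, U₁ᗮ ⊓ U₂ᗮ, ?_, ?_, ?_, ?_, ?_, ?_, ?_, ?_, ?_, ?_,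
    ?_, ?_, ?_, ?_, ?_, ?_, ?_, ?_, ?_⟩
  · rw [Submodule.coe_inf]
    exact (isClosed_UPart T₁).inter (isClosed_UPart T₂)
  · rw [Submodule.coe_inf]
    exact (isClosed_UPart T₁).inter U₂.isClosed_orthogonal
  · rw [Submodule.coe_inf]
    exact U₁.isClosed_orthogonal.inter (isClosed_UPart T₂)
  · rw [Submodule.coe_inf]
    exact U₁.isClosed_orthogonal.inter U₂.isClosed_orthogonal
  · exact fun x hx y hy => (Submodule.mem_orthogonal U₂ y).1 hy.2 x hx.2
  · exact fun x hx y hy => (Submodule.mem_orthogonal U₁ y).1 hy.1 x hx.1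
  · exact fun x hx y hy => (Submodule.mem_orthogonal U₁ y).1 hy.1 x hx.1
  · exact fun x hx y hy => (Submodule.mem_orthogonal U₁ y).1 hy.1 x hx.1
  · exact fun x hx y hy => (Submodule.mem_orthogonal U₁ y).1 hy.1 x hx.1
  · exact fun x hx y hy => (Submodule.mem_orthogonal U₂ y).1 hy.2 x hx.2
  · -- the sup is everything
    haveI : CompleteSpace U₁ := (isClosed_UPart T₁).isComplete.completeSpace_coe
    haveI : CompleteSpace U₂ := (isClosed_UPart T₂).isComplete.completeSpace_coe
    rw [eq_top_iff]
    rintro h -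
    obtain ⟨a, ha, b, hb, rfl⟩ := U₁.exists_add_mem_mem_orthogonal h
    obtain ⟨u, hu, w, hw, hau⟩ := U₂.exists_add_mem_mem_orthogonal a
    obtain ⟨u', hu', w', hw', hbu⟩ := U₂.exists_add_mem_mem_orthogonal b
    have hcomp := comp_mem_UPart U2_T1 U2_T1a hu hw (by rw [← hau]; exact ha)
    have hu'o : u' ∈ U₁ᗮ := by
      rw [Submodule.mem_orthogonal]
      intro x hx
      obtain ⟨p, hp, q, hq, hxpq⟩ := U₂.exists_add_mem_mem_orthogonal x
      have hpq := comp_mem_UPart U2_T1 U2_T1a hp hq (by rw [← hxpq]; exact hx)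
      have o1 : ⟪q, u'⟫_ℂ = 0 := by
        rw [inner_eq_zero_symm]
        exact (Submodule.mem_orthogonal U₂ q).1 hq u' hu'
      have o2 : ⟪p, b⟫_ℂ = 0 := (Submodule.mem_orthogonal U₁ b).1 hb p hpq.1
      have o3 : ⟪p, w'⟫_ℂ = 0 := (Submodule.mem_orthogonal U₂ w').1 hw' p hp
      have hb' : u' = b - w' := by rw [hbu]; abel
      calc ⟪x, u'⟫_ℂ = ⟪p, u'⟫_ℂ + ⟪q, u'⟫_ℂ := by rw [hxpq, inner_add_left]
        _ = ⟪p, b - w'⟫_ℂ + 0 := by rw [o1, hb']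
        _ = ⟪p, b⟫_ℂ - ⟪p, w'⟫_ℂ := by rw [inner_sub_right, add_zero]
        _ = 0 := by rw [o2, o3, sub_zero]
    have hw'o : w' ∈ U₁ᗮ := by
      have e : w' = b - u' := by rw [hbu]; abel
      rw [e]; exact Submodule.sub_mem _ hb hu'o
    rw [hau, hbu]
    have m1 : u ∈ U₁ ⊓ U₂ := ⟨hcomp.1, hu⟩
    have m2 : w ∈ U₁ ⊓ U₂ᗮ := ⟨hcomp.2, hw⟩
    have m3 : u' ∈ U₁ᗮ ⊓ U₂ := ⟨hu'o, hu'⟩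
    have m4 : w' ∈ U₁ᗮ ⊓ U₂ᗮ := ⟨hw'o, hw'⟩
    exact add_mem
      (add_mem (Submodule.mem_sup_left (Submodule.mem_sup_left (Submodule.mem_sup_left m1)))
        (Submodule.mem_sup_left (Submodule.mem_sup_left (Submodule.mem_sup_right m2))))
      (add_mem (Submodule.mem_sup_left (Submodule.mem_sup_right m3))
        (Submodule.mem_sup_right m4))
  · exact ⟨⟨fun x hx => ⟨U1_T1 x hx.1, U2_T1 x hx.2⟩,
      fun x hx => ⟨U1_T1a x hx.1, U2_T1a x hx.2⟩⟩,
      ⟨fun x hx => ⟨U1_T2 x hx.1, U2_T2 x hx.2⟩,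
      fun x hx => ⟨U1_T2a x hx.1, U2_T2a x hx.2⟩⟩⟩
  · exact ⟨⟨fun x hx => ⟨U1_T1 x hx.1, U2o_T1 x hx.2⟩,
      fun x hx => ⟨U1_T1a x hx.1, U2o_T1a x hx.2⟩⟩,
      ⟨fun x hx => ⟨U1_T2 x hx.1, U2o_T2 x hx.2⟩,
      fun x hx => ⟨U1_T2a x hx.1, U2o_T2a x hx.2⟩⟩⟩
  · exact ⟨⟨fun x hx => ⟨U1o_T1 x hx.1, U2_T1 x hx.2⟩,
      fun x hx => ⟨U1o_T1a x hx.1, U2_T1a x hx.2⟩⟩,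
      ⟨fun x hx => ⟨U1o_T2 x hx.1, U2_T2 x hx.2⟩,
      fun x hx => ⟨U1o_T2a x hx.1, U2_T2a x hx.2⟩⟩⟩
  · exact ⟨⟨fun x hx => ⟨U1o_T1 x hx.1, U2o_T1 x hx.2⟩,
      fun x hx => ⟨U1o_T1a x hx.1, U2o_T1a x hx.2⟩⟩,
      ⟨fun x hx => ⟨U1o_T2 x hx.1, U2o_T2 x hx.2⟩,
      fun x hx => ⟨U1o_T2a x hx.1, U2o_T2a x hx.2⟩⟩⟩
  · exact ⟨unitaryOn_of_le_UPart hT₁ inf_le_left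
      (fun x hx => ⟨U1_T1a x hx.1, U2_T1a x hx.2⟩),
      unitaryOn_of_le_UPart hT₂ inf_le_right
      (fun x hx => ⟨U1_T2a x hx.1, U2_T2a x hx.2⟩)⟩
  · refine ⟨unitaryOn_of_le_UPart hT₁ inf_le_left
      (fun x hx => ⟨U1_T1a x hx.1, U2o_T1a x hx.2⟩), ?_⟩
    refine cnuOn_of_disjoint hT₂ fun h hh hU => ?_
    exact inner_self_eq_zero.1 ((Submodule.mem_orthogonal U₂ h).1 hh.2 h hU)
  · refine ⟨?_, unitaryOn_of_le_UPart hT₂ inf_le_right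
      (fun x hx => ⟨U1o_T2a x hx.1, U2_T2a x hx.2⟩)⟩
    refine cnuOn_of_disjoint hT₁ fun h hh hU => ?_
    exact inner_self_eq_zero.1 ((Submodule.mem_orthogonal U₁ h).1 hh.1 h hU)
  · constructor
    · refine cnuOn_of_disjoint hT₁ fun h hh hU => ?_
      exact inner_self_eq_zero.1 ((Submodule.mem_orthogonal U₁ h).1 hh.1 h hU)
    · refine cnuOn_of_disjoint hT₂ fun h hh hU => ?_
      exact inner_self_eq_zero.1 ((Submodule.mem_orthogonal U₂ h).1 hh.2 h hU)
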